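/- arXiv:2206.13132 — 6 statements merged into one kernel-verified Lean document; each statement's English description precedes it below -/
import Mathlib

section
/- For every positive integer k, c̃_k = (∏_{i=0}^{k−1}(d^u + i) / k!)·c̃_0. -/
/-- For every positive integer `k`,
`c̃_k = (∏_{i=0}^{k−1}(d^u + i) / k!)·c̃_0`, where `c̃_0 = c_0 > 0` and
`c̃_w = (1/w)·Σ_{r=0}^{w−1} d^u·c̃_r` for `w ≥ 1`, with `d^u > 0`. -/
theorem ct_explicit_formula
    (du c0 : ℝ) (hdu : 0 < du) (hc0 : 0 < c0)
    (ct : ℕ → ℝ) (hct0 : ct 0 = c0)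
    (hct : ∀ w : ℕ, 1 ≤ w → ct w = (1 / (w : ℝ)) * ∑ r ∈ Finset.range w, du * ct r)
    (k : ℕ) (hk : 1 ≤ k) :
    ct k = (∏ i ∈ Finset.range k, (du + (i : ℝ))) / (Nat.factorial k : ℝ) * ct 0 := by
  induction k, hk using Nat.le_induction with
  | base =>
    rw [hct 1 le_rfl]
    simp
  | succ n hn ih =>
    have hsum : ∑ r ∈ Finset.range n, du * ct r = (n : ℝ) * ct n := by
      have h := hct n hn
      have hn0 : (n : ℝ) ≠ 0 := by positivity
      field_simp at h
      linarith [h]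
    have hstep : ct (n + 1) = (du + (n : ℝ)) / ((n : ℝ) + 1) * ct n := by
      rw [hct (n + 1) (by omega), Finset.sum_range_succ, hsum]
      push_cast
      ring
    rw [hstep, ih, Finset.prod_range_succ, Nat.factorial_succ]
    have hfac : (Nat.factorial n : ℝ) ≠ 0 := by positivity
    have hn1 : ((n : ℝ) + 1) ≠ 0 := by positivity
    push_cast
    field_simp
end

section
/- Let D be a positive integer with d^u ≤ D. Then c̃_{D−1} ≤ e^{2D−1}·c̃_0, where e is Euler's number. -/
/-!
Telescoping the averaging recursion gives `(w + 1) c̃_{w+1} = (w + d^u) c̃_w`, so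
`c̃_w = c̃_0 ∏_{k<w} (k + d^u)/(k + 1)`. For `d^u ≤ n + 1` each factor is at most
`(k + n + 1)/(k + 1)`, and these products are the binomial coefficients `C(n + w, w)`.
With `D = m + 1` this bounds `c̃_{D-1}` by the central coefficient `C(2m, m) ≤ 4^m ≤ e^{2m+1}`.
-/

namespace AveragingRecursion

variable {du : ℝ} {ct : ℕ → ℝ}
  (hct : ∀ w : ℕ, 1 ≤ w → ct w = (1 / (w : ℝ)) * ∑ r ∈ Finset.range w, du * ct r)
include hct

theorem sum_range_eq_mul (w : ℕ) :
    ∑ r ∈ Finset.range w, du * ct r = w * ct w := by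
  rcases Nat.eq_zero_or_pos w with rfl | hw
  · simp
  · rw [hct w hw, ← mul_assoc, mul_one_div_cancel (by positivity), one_mul]

theorem succ_mul_eq (w : ℕ) :
    ((w : ℝ) + 1) * ct (w + 1) = (w + du) * ct w := by
  have h := sum_range_eq_mul hct (w + 1)
  rw [Finset.sum_range_succ, sum_range_eq_mul hct w] at h
  push_cast at h
  linarith

theorem nonneg (hdu : 0 ≤ du) (h0 : 0 ≤ ct 0) (w : ℕ) : 0 ≤ ct w := by
  induction w with
  | zero => exact h0
  | succ w ih =>
    have h := succ_mul_eq hct w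
    have : 0 ≤ ((w : ℝ) + 1) * ct (w + 1) := h ▸ by positivity
    exact nonneg_of_mul_nonneg_right this (by positivity)

theorem le_choose_mul {n : ℕ} (hdu : 0 ≤ du) (hdun : du ≤ n + 1) (h0 : 0 ≤ ct 0) (w : ℕ) :
    ct w ≤ (n + w).choose w * ct 0 := by
  induction w with
  | zero => simp
  | succ w ih =>
    have hchoose :
        ((n + w : ℕ) + 1 : ℝ) * (n + w).choose w = (n + w + 1).choose (w + 1) * (w + 1) := by
      exact_mod_cast Nat.add_one_mul_choose_eq (n + w) w
    have key :
        ((w : ℝ) + 1) * ct (w + 1) ≤ ((w : ℝ) + 1) * ((n + w + 1).choose (w + 1) * ct 0) :=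
      calc ((w : ℝ) + 1) * ct (w + 1) = (w + du) * ct w := succ_mul_eq hct w
        _ ≤ ((n + w : ℕ) + 1) * ((n + w).choose w * ct 0) := by
          have hfactor : (w : ℝ) + du ≤ (n + w : ℕ) + 1 := by push_cast; linarith
          exact mul_le_mul hfactor ih (nonneg hct hdu h0 w) (by positivity)
        _ = ((w : ℝ) + 1) * ((n + w + 1).choose (w + 1) * ct 0) := by
          rw [← mul_assoc, hchoose]; ring
    exact le_of_mul_le_mul_left key (by positivity)

end AveragingRecursion

theorem four_pow_le_exp_one_pow (m : ℕ) : (4 : ℝ) ^ m ≤ Real.exp 1 ^ (2 * m + 1) := by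
  have he : (2 : ℝ) ≤ Real.exp 1 := by linarith [Real.add_one_le_exp (1 : ℝ)]
  calc (4 : ℝ) ^ m = 2 ^ (2 * m) := by rw [pow_mul]; norm_num
    _ ≤ Real.exp 1 ^ (2 * m) := by gcongr
    _ ≤ Real.exp 1 ^ (2 * m + 1) := pow_le_pow_right₀ (by linarith) (by omega)

/-- If `D` is a positive integer with `d^u ≤ D`, then `c̃_{D−1} ≤ e^{2D−1}·c̃_0`,
where `c̃_0 = c_0 > 0` and `c̃_w = (1/w)·Σ_{r=0}^{w−1} d^u·c̃_r` for `w ≥ 1`,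
with `d^u > 0` and `e` Euler's number. -/
theorem ct_Dsub1_exp_bound
    (du c0 : ℝ) (hdu : 0 < du) (hc0 : 0 < c0)
    (ct : ℕ → ℝ) (hct0 : ct 0 = c0)
    (hct : ∀ w : ℕ, 1 ≤ w → ct w = (1 / (w : ℝ)) * ∑ r ∈ Finset.range w, du * ct r)
    (D : ℕ) (hD : 1 ≤ D) (hduD : du ≤ (D : ℝ)) :
    ct (D - 1) ≤ Real.exp 1 ^ (2 * D - 1) * ct 0 := by
  obtain ⟨m, rfl⟩ : ∃ m, D = m + 1 := ⟨D - 1, by omega⟩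
  have h0 : 0 ≤ ct 0 := hct0 ▸ hc0.le
  have hcentral : ((m + m).choose m : ℝ) ≤ 4 ^ m := by
    rw [← two_mul, ← Nat.centralBinom_eq_two_mul_choose]
    exact_mod_cast Nat.centralBinom_le_four_pow m
  rw [Nat.add_sub_cancel, show 2 * (m + 1) - 1 = 2 * m + 1 by omega]
  calc ct m ≤ (m + m).choose m * ct 0 :=
      AveragingRecursion.le_choose_mul hct hdu.le (by exact_mod_cast hduD) h0 m
    _ ≤ 4 ^ m * ct 0 := by gcongr
    _ ≤ Real.exp 1 ^ (2 * m + 1) * ct 0 := by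
      gcongr
      exact four_pow_le_exp_one_pow m
end

section
/- Let D ≥ 2 be an integer with 0 < d^u ≤ D, and define ẽ_w := c̃_w / ∏_{j=1}^{D}(w + 2 − j) for integers w ≥ D − 1. Then for every integer w ≥ D − 1, ẽ_{w+1} ≤ ((d^u + w)(w + 2 − D)/((w + 2)(w + 1)))·ẽ_w and ẽ_{w+1} < ẽ_w; in particular (ẽ_w)_{w ≥ D−1} is strictly decreasing. -/
/-!
Averaging the recurrence gives `c̃_{w+1} = (d^u + w)/(w + 1) · c̃_w`, while the product in the
denominator is a falling factorial, so that its value at `w + 1` is `(w + 2)/(w + 2 − D)` times its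
value at `w`. Hence `ẽ_{w+1} = ρ_w ẽ_w` with
`ρ_w = (d^u + w)(w + 2 − D)/((w + 2)(w + 1))`, and `d^u ≤ D` gives
`(d^u + w)(w + 2 − D) ≤ (w + 1)² − (D − 1)² < (w + 2)(w + 1)`, i.e. `ρ_w < 1`.
-/

open Finset

section AveragingRecurrence

variable {a : ℝ} {c : ℕ → ℝ}
  (hc : ∀ w : ℕ, 1 ≤ w → c w = (1 / (w : ℝ)) * ∑ r ∈ range w, a * c r)
include hc

theorem natCast_mul_eq_sum_of_avg (w : ℕ) : (w : ℝ) * c w = ∑ r ∈ range w, a * c r := by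
  cases w with
  | zero => simp
  | succ n =>
    rw [hc (n + 1) n.succ_pos, ← mul_assoc, mul_one_div_cancel (by positivity), one_mul]

theorem succ_eq_of_avg (w : ℕ) : c (w + 1) = (a + w) / (w + 1) * c w := by
  have hsum := hc (w + 1) w.succ_pos
  rw [sum_range_succ, ← natCast_mul_eq_sum_of_avg hc w] at hsum
  rw [hsum]
  push_cast
  field_simp
  ring

theorem pos_of_avg (ha : 0 < a) (hc0 : 0 < c 0) (w : ℕ) : 0 < c w := by
  induction w with
  | zero => exact hc0
  | succ n ih => rw [succ_eq_of_avg hc n]; positivity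

end AveragingRecurrence

theorem prod_Icc_add_one_sub_mul {R : Type*} [CommRing R] (y : R) (m : ℕ) :
    (∏ j ∈ Icc 1 m, (y + 1 - j)) * (y - m) = y * ∏ j ∈ Icc 1 m, (y - j) := by
  induction m with
  | zero => simp
  | succ n ih =>
    rw [prod_Icc_succ_top (by omega), prod_Icc_succ_top (by omega)]
    push_cast
    linear_combination (y - n - 1) * ih

theorem prod_Icc_natCast_add_two_sub_pos {D w : ℕ} (hw : D ≤ w + 1) :
    0 < ∏ j ∈ Icc 1 D, ((w : ℝ) + 2 - j) := by
  refine prod_pos fun j hj => ?_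
  have hjw : (j : ℝ) ≤ w + 1 := by exact_mod_cast (mem_Icc.1 hj).2.trans hw
  linarith

theorem avg_ratio_lt_one {a : ℝ} {D w : ℕ} (haD : a ≤ D) (hw : D ≤ w + 1) :
    (a + w) * ((w : ℝ) + 2 - D) / (((w : ℝ) + 2) * ((w : ℝ) + 1)) < 1 := by
  have hDw : (D : ℝ) ≤ w + 1 := by exact_mod_cast hw
  rw [div_lt_one (by positivity)]
  calc (a + w) * ((w : ℝ) + 2 - D) ≤ (D + w) * ((w : ℝ) + 2 - D) := by gcongr; linarith
    _ = ((w : ℝ) + 1) ^ 2 - ((D : ℝ) - 1) ^ 2 := by ring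
    _ < ((w : ℝ) + 2) * ((w : ℝ) + 1) := by nlinarith [sq_nonneg ((D : ℝ) - 1)]

theorem et_general_D_strict_general
    (du c0 : ℝ) (hdu : 0 < du) (hc0 : 0 < c0)
    (ct : ℕ → ℝ) (hct0 : ct 0 = c0)
    (hct : ∀ w : ℕ, 1 ≤ w → ct w = (1 / (w : ℝ)) * ∑ r ∈ Finset.range w, du * ct r)
    (D : ℕ) (hduD : du ≤ (D : ℝ))
    (et : ℕ → ℝ)
    (het : ∀ w : ℕ, D - 1 ≤ w →
      et w = ct w / ∏ j ∈ Finset.Icc 1 D, ((w : ℝ) + 2 - (j : ℝ))) :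
    (∀ w : ℕ, D - 1 ≤ w →
      et (w + 1) ≤ ((du + w) * ((w : ℝ) + 2 - (D : ℝ)) / (((w : ℝ) + 2) * ((w : ℝ) + 1))) * et w
        ∧ et (w + 1) < et w) ∧
    StrictAntiOn et {w : ℕ | D - 1 ≤ w} := by
  have hstep (w : ℕ) (hw : D - 1 ≤ w) :
      et (w + 1) = (du + w) * ((w : ℝ) + 2 - D) / (((w : ℝ) + 2) * ((w : ℝ) + 1)) * et w := by
    have hP := prod_Icc_natCast_add_two_sub_pos (show D ≤ w + 1 by omega)
    have hP' := prod_Icc_natCast_add_two_sub_pos (show D ≤ w + 1 + 1 by omega)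
    have hshift := prod_Icc_add_one_sub_mul ((w : ℝ) + 2) D
    rw [het (w + 1) (by omega), het w hw, succ_eq_of_avg hct w]
    push_cast at hP' ⊢
    simp only [show ∀ j : ℝ, (w : ℝ) + 1 + 2 - j = (w : ℝ) + 2 + 1 - j from fun j => by ring]
      at hP' ⊢
    field_simp
    linear_combination (-ct w) * hshift
  have hlt (w : ℕ) (hw : D - 1 ≤ w) : et (w + 1) < et w := by
    have het_pos : 0 < et w := by
      rw [het w hw]
      exact div_pos (pos_of_avg hct hdu (hct0 ▸ hc0) w)
        (prod_Icc_natCast_add_two_sub_pos (by omega))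
    rw [hstep w hw]
    exact mul_lt_of_lt_one_left het_pos (avg_ratio_lt_one hduD (by omega))
  exact ⟨fun w hw => ⟨(hstep w hw).le, hlt w hw⟩,
    strictAntiOn_of_succ_lt Set.ordConnected_Ici fun w _ hw _ => hlt w hw⟩

/-- Let `D ≥ 2` be an integer with `0 < d^u ≤ D` and, for `w ≥ D − 1`, set
`ẽ_w := c̃_w / ∏_{j=1}^{D}(w + 2 − j)`. Then for every `w ≥ D − 1`,
`ẽ_{w+1} ≤ ((d^u + w)(w + 2 − D)/((w + 2)(w + 1)))·ẽ_w` and `ẽ_{w+1} < ẽ_w`;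
in particular `(ẽ_w)_{w ≥ D−1}` is strictly decreasing. Here `c̃_0 = c_0 > 0`
and `c̃_w = (1/w)·Σ_{r=0}^{w−1} d^u·c̃_r` for `w ≥ 1`. -/
theorem et_general_D_strict
    (du c0 : ℝ) (hdu : 0 < du) (hc0 : 0 < c0)
    (ct : ℕ → ℝ) (hct0 : ct 0 = c0)
    (hct : ∀ w : ℕ, 1 ≤ w → ct w = (1 / (w : ℝ)) * ∑ r ∈ Finset.range w, du * ct r)
    (D : ℕ) (hD : 2 ≤ D) (hduD : du ≤ (D : ℝ))
    (et : ℕ → ℝ)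
    (het : ∀ w : ℕ, D - 1 ≤ w →
      et w = ct w / ∏ j ∈ Finset.Icc 1 D, ((w : ℝ) + 2 - (j : ℝ))) :
    (∀ w : ℕ, D - 1 ≤ w →
      et (w + 1) ≤ ((du + w) * ((w : ℝ) + 2 - (D : ℝ)) / (((w : ℝ) + 2) * ((w : ℝ) + 1))) * et w
        ∧ et (w + 1) < et w) ∧
    StrictAntiOn et {w : ℕ | D - 1 ≤ w} :=
  et_general_D_strict_general du c0 hdu hc0 ct hct0 hct D hduD et het
end

section
/- Let (d_w)_{w≥1} be a real sequence, d^u > 0 with |d_w| ≤ d^u for all w ≥ 1, and let D be a positive integer with D − 1 ≤ d^u ≤ D. Let c_0 > 0, c_w := (1/w)·Σ_{r=0}^{w−1} d_{w−r}·c_r for w ≥ 1, and let c̃_0 := c_0, c̃_w := (1/w)·Σ_{r=0}^{w−1} d^u·c̃_r for w ≥ 1. Define e_w := c_w/(w+1) for all w ≥ 0 if D = 1, and, if D ≥ 2, define e_w := c_w for 0 ≤ w ≤ D − 2 and e_w := c_w / ∏_{j=1}^{D}(w + 2 − j) for w ≥ D − 1. Then |e_w| ≤ c̃_{D−1} for every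 integer w ≥ 0. -/
/-!
The constant-coefficient sequence `c̃` majorises `|c|` termwise and satisfies
`(w + 1) c̃_{w+1} = (w + d^u) c̃_w`; for `d^u ≥ 1` it is nondecreasing, which settles
`w ≤ D − 2`. For `w ≥ D − 1` the normaliser `∏_{j=1}^{D} (w + 2 − j)` is the falling factorial
`(w + 1)^{\underline{D}}` (for `D = 1` it is `w + 1`), whose ratio `(w + 2)/(w + 2 − D)` dominates
the ratio `(w + d^u)/(w + 1)` of `c̃` because `d^u ≤ D`. Hence `c̃_w / (w + 1)^{\underline{D}}`
decreases from `w = D − 1`, where the denominator is `D! ≥ 1`.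
-/

open Finset

section ConstantCoefficient

variable {du : ℝ} {ct : ℕ → ℝ}

theorem succ_mul_eq_of_avg
    (hct : ∀ w : ℕ, 1 ≤ w → ct w = (1 / (w : ℝ)) * ∑ r ∈ range w, du * ct r) (w : ℕ) :
    ((w : ℝ) + 1) * ct (w + 1) = (w + du) * ct w := by
  have hsum : ∀ n : ℕ, ∑ r ∈ range n, du * ct r = n * ct n := by
    rintro (_ | n)
    · simp
    · rw [hct _ n.succ_pos]
      field_simp
  rw [← Nat.cast_succ, ← hsum, sum_range_succ, hsum]
  ring

variable (hstep : ∀ w : ℕ, ((w : ℝ) + 1) * ct (w + 1) = (w + du) * ct w)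
include hstep

theorem nonneg_of_succ_mul_eq (hdu : 0 ≤ du) (h0 : 0 ≤ ct 0) (w : ℕ) : 0 ≤ ct w := by
  induction w with
  | zero => exact h0
  | succ w ih =>
    refine (mul_nonneg_iff_of_pos_left (by positivity : (0 : ℝ) < w + 1)).mp ?_
    rw [hstep]
    positivity

theorem monotone_of_succ_mul_eq (hdu : 1 ≤ du) (h0 : 0 ≤ ct 0) : Monotone ct := by
  refine monotone_nat_of_le_succ fun w ↦
    le_of_mul_le_mul_left ?_ (by positivity : (0 : ℝ) < w + 1)
  rw [hstep]
  nlinarith [nonneg_of_succ_mul_eq hstep (by linarith) h0 w]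

theorem div_descFactorial_succ_le {D : ℕ} (hdu : du ≤ D) (hnn : ∀ w, 0 ≤ ct w) {n : ℕ}
    (hn : D ≤ n + 1) :
    ct (n + 1) / (n + 1 + 1).descFactorial D ≤ ct n / (n + 1).descFactorial D := by
  have hp : (0 : ℝ) < (n + 1).descFactorial D := by exact_mod_cast Nat.descFactorial_pos.mpr hn
  have hq : (0 : ℝ) < (n + 1 + 1).descFactorial D := by
    exact_mod_cast Nat.descFactorial_pos.mpr (by omega)
  have hDn : (D : ℝ) ≤ n + 1 := by exact_mod_cast hn
  have hrec :
      ((n : ℝ) + 2 - D) * (n + 1 + 1).descFactorial D = (n + 2) * (n + 1).descFactorial D := by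
    have := Nat.succ_descFactorial (n + 1) D
    rw [← Nat.cast_inj (R := ℝ)] at this
    push_cast [Nat.cast_sub (show D ≤ n + 1 + 1 by omega)] at this
    linarith
  have hgap : (0 : ℝ) < n + 2 - D := by linarith
  rw [div_le_div_iff₀ hq hp]
  refine le_of_mul_le_mul_left ?_ (by positivity : (0 : ℝ) < (n + 1) * (n + 2 - D))
  -- `(n + du)(n + 2 - D) ≤ (n + D)(n + 2 - D) = (n + 1)^2 - (D - 1)^2`
  have key : ((n : ℝ) + du) * (n + 2 - D) ≤ (n + 1) * (n + 2) := by
    nlinarith [mul_le_mul_of_nonneg_right (add_le_add_left hdu (n : ℝ)) hgap.le,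
      sq_nonneg ((D : ℝ) - 1), (n.cast_nonneg : (0 : ℝ) ≤ n)]
  calc (n + 1) * (n + 2 - D) * (ct (n + 1) * (n + 1).descFactorial D)
      = (n + du) * (n + 2 - D) * (ct n * (n + 1).descFactorial D) := by
        linear_combination ((n + 2 - D) * ((n + 1).descFactorial D : ℝ)) * hstep n
    _ ≤ (n + 1) * (n + 2) * (ct n * (n + 1).descFactorial D) := by
        gcongr
        exact mul_nonneg (hnn n) hp.le
    _ = (n + 1) * (n + 2 - D) * (ct n * (n + 1 + 1).descFactorial D) := by
        linear_combination (-((n : ℝ) + 1) * ct n) * hrec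

theorem antitoneOn_div_descFactorial {D : ℕ} (hdu : du ≤ D) (hnn : ∀ w, 0 ≤ ct w) :
    AntitoneOn (fun n ↦ ct n / (n + 1).descFactorial D) {n | D - 1 ≤ n} :=
  antitoneOn_nat_Ici_of_succ_le fun n hn ↦
    div_descFactorial_succ_le hstep hdu hnn (by omega)

end ConstantCoefficient

theorem abs_le_of_majorant {d c ct : ℕ → ℝ} {du : ℝ} (hdu : 0 ≤ du)
    (hd : ∀ w : ℕ, 1 ≤ w → |d w| ≤ du) (h0 : |c 0| ≤ ct 0)
    (hc : ∀ w : ℕ, 1 ≤ w → c w = (1 / (w : ℝ)) * ∑ r ∈ range w, d (w - r) * c r)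
    (hct : ∀ w : ℕ, 1 ≤ w → ct w = (1 / (w : ℝ)) * ∑ r ∈ range w, du * ct r) (w : ℕ) :
    |c w| ≤ ct w := by
  induction w using Nat.strong_induction_on with
  | _ w ih =>
    rcases Nat.eq_zero_or_pos w with rfl | hw
    · exact h0
    rw [hc w hw, hct w hw, abs_mul, abs_of_nonneg (by positivity)]
    gcongr
    calc |∑ r ∈ range w, d (w - r) * c r|
        ≤ ∑ r ∈ range w, |d (w - r)| * |c r| := by
          simpa only [abs_mul] using abs_sum_le_sum_abs (fun r ↦ d (w - r) * c r) (range w)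
      _ ≤ ∑ r ∈ range w, du * ct r := by
          gcongr with r hr
          · exact hd _ (Nat.sub_pos_of_lt (mem_range.mp hr))
          · exact ih r (mem_range.mp hr)

theorem prod_Icc_add_two_sub_eq_descFactorial {w D : ℕ} (h : D ≤ w + 1) :
    ∏ j ∈ Icc 1 D, ((w : ℝ) + 2 - j) = (w + 1).descFactorial D := by
  induction D with
  | zero => simp
  | succ D ih =>
    rw [prod_Icc_succ_top (by omega), ih (by omega), Nat.descFactorial_succ,
      Nat.cast_mul, Nat.cast_sub (by omega)]
    push_cast
    ring

/-- With `|d_w| ≤ d^u` for `w ≥ 1`, `D` a positive integer such that `D − 1 ≤ d^u ≤ D`,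
`c_0 > 0`, `c_w = (1/w)·Σ_{r=0}^{w−1} d_{w−r}·c_r`, `c̃_0 = c_0`,
`c̃_w = (1/w)·Σ_{r=0}^{w−1} d^u·c̃_r`, and `e_w` defined by
`e_w = c_w/(w+1)` (all `w`) if `D = 1`, while if `D ≥ 2` then `e_w = c_w` for
`w ≤ D − 2` and `e_w = c_w / ∏_{j=1}^{D}(w + 2 − j)` for `w ≥ D − 1`:
we have `|e_w| ≤ c̃_{D−1}` for every `w ≥ 0`. -/
theorem abs_e_le_ct_Dsub1
    (d : ℕ → ℝ) (du : ℝ) (hdu : 0 < du) (hdbd : ∀ w : ℕ, 1 ≤ w → |d w| ≤ du)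
    (D : ℕ) (hD : 1 ≤ D) (hD1 : (D : ℝ) - 1 ≤ du) (hD2 : du ≤ (D : ℝ))
    (c0 : ℝ) (hc0 : 0 < c0)
    (c ct : ℕ → ℝ) (hcz : c 0 = c0) (hctz : ct 0 = c0)
    (hc : ∀ w : ℕ, 1 ≤ w → c w = (1 / (w : ℝ)) * ∑ r ∈ Finset.range w, d (w - r) * c r)
    (hct : ∀ w : ℕ, 1 ≤ w → ct w = (1 / (w : ℝ)) * ∑ r ∈ Finset.range w, du * ct r)
    (e : ℕ → ℝ)
    (he1 : D = 1 → ∀ w : ℕ, e w = c w / ((w : ℝ) + 1))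
    (he2 : 2 ≤ D → ∀ w : ℕ, w ≤ D - 2 → e w = c w)
    (he3 : 2 ≤ D → ∀ w : ℕ, D - 1 ≤ w →
      e w = c w / ∏ j ∈ Finset.Icc 1 D, ((w : ℝ) + 2 - (j : ℝ))) :
    ∀ w : ℕ, |e w| ≤ ct (D - 1) := by
  have hstep := succ_mul_eq_of_avg hct
  have hnn := nonneg_of_succ_mul_eq hstep hdu.le (hctz ▸ hc0.le)
  have hmaj := abs_le_of_majorant hdu.le hdbd (by rw [hcz, hctz, abs_of_pos hc0]) hc hct
  intro w
  rcases lt_or_ge w (D - 1) with hw | hw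
  · have hD_two : 2 ≤ D := by omega
    rw [he2 hD_two w (by omega)]
    have hdu1 : 1 ≤ du := by linarith [(Nat.ofNat_le_cast.mpr hD_two : (2 : ℝ) ≤ D)]
    exact (hmaj w).trans (monotone_of_succ_mul_eq hstep hdu1 (hnn 0) hw.le)
  have he : e w = c w / (w + 1).descFactorial D := by
    rcases hD.eq_or_lt with rfl | hD_two
    · simp [he1 rfl w]
    · rw [he3 hD_two w hw, prod_Icc_add_two_sub_eq_descFactorial (by omega)]
  have hP : (1 : ℝ) ≤ (D - 1 + 1).descFactorial D := by
    exact_mod_cast Nat.descFactorial_pos.mpr (by omega)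
  rw [he, abs_div, Nat.abs_cast]
  calc |c w| / (w + 1).descFactorial D
      ≤ ct w / (w + 1).descFactorial D := by gcongr; exact hmaj w
    _ ≤ ct (D - 1) / (D - 1 + 1).descFactorial D :=
        antitoneOn_div_descFactorial hstep hD2 hnn (le_refl (D - 1)) hw hw
    _ ≤ ct (D - 1) := div_le_self (hnn _) hP
end

section
/- Let y > 0 and t be real numbers with t ≥ e^{2/e}·y, where e is Euler's number. Then (y/t)^w ≤ 1/w² for every positive integer w, and consequently Σ_{w=1}^{∞} (y/t)^w ≤ π²/6. -/
/-! From `e·x ≤ eˣ` we get `w ≤ e^{w/e}`, so `y/t ≤ e^{-2/e}` gives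
`(y/t)^w ≤ e^{-2w/e} ≤ 1/w²`; the sum is then dominated termwise by the Basel series. -/

open Real

lemma le_exp_div_exp_one (x : ℝ) : x ≤ exp (x / exp 1) := by
  simpa [mul_div_cancel₀ x (exp_pos 1).ne'] using exp_one_mul_le_exp (x := x / exp 1)

lemma pow_le_one_div_sq_of_le_exp_neg {q : ℝ} (hq0 : 0 ≤ q) (hq : q ≤ exp (-(2 / exp 1)))
    {w : ℕ} (hw : 0 < w) : q ^ w ≤ 1 / (w : ℝ) ^ 2 := by
  have hw0 : (0 : ℝ) < w := by exact_mod_cast hw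
  calc q ^ w ≤ exp (-(2 / exp 1)) ^ w := pow_le_pow_left₀ hq0 hq w
    _ = 1 / exp (w / exp 1) ^ 2 := by
      rw [← exp_nat_mul, ← exp_nat_mul, one_div, ← exp_neg]
      ring_nf
    _ ≤ 1 / (w : ℝ) ^ 2 := by
      gcongr
      exact le_exp_div_exp_one w

lemma hasSum_one_div_succ_sq : HasSum (fun n : ℕ => 1 / ((n : ℝ) + 1) ^ 2) (π ^ 2 / 6) := by
  simpa using (hasSum_nat_add_iff' (f := fun n : ℕ => (1 : ℝ) / (n : ℝ) ^ 2) 1).mpr hasSum_zeta_two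

lemma tsum_le_pi_sq_div_six {f : ℕ → ℝ} (hf0 : ∀ n, 0 ≤ f n)
    (hf : ∀ n, f n ≤ 1 / ((n : ℝ) + 1) ^ 2) : ∑' n, f n ≤ π ^ 2 / 6 :=
  hasSum_one_div_succ_sq.tsum_eq ▸
    (Summable.of_nonneg_of_le hf0 hf hasSum_one_div_succ_sq.summable).tsum_le_tsum hf
      hasSum_one_div_succ_sq.summable

lemma div_le_exp_neg_of_exp_mul_le {y t c : ℝ} (hy : 0 < y) (ht : exp c * y ≤ t) :
    y / t ≤ exp (-c) := by
  have ht0 : 0 < t := lt_of_lt_of_le (by positivity) ht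
  rw [exp_neg, div_le_iff₀ ht0, inv_mul_eq_div, le_div_iff₀ (exp_pos _)]
  linarith

/-- If `y > 0` and `t ≥ e^{2/e}·y`, then `(y/t)^w ≤ 1/w²` for every positive integer `w`,
and consequently `Σ_{w=1}^{∞} (y/t)^w ≤ π²/6`. -/
theorem geometric_le_basel
    (y t : ℝ) (hy : 0 < y) (ht : Real.exp (2 / Real.exp 1) * y ≤ t) :
    (∀ w : ℕ, 1 ≤ w → (y / t) ^ w ≤ 1 / (w : ℝ) ^ 2) ∧
    (∑' w : ℕ, (y / t) ^ (w + 1)) ≤ Real.pi ^ 2 / 6 := by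
  have hq0 : 0 ≤ y / t := div_nonneg hy.le (lt_of_lt_of_le (by positivity) ht).le
  have hq := div_le_exp_neg_of_exp_mul_le hy ht
  have key : ∀ w : ℕ, 1 ≤ w → (y / t) ^ w ≤ 1 / (w : ℝ) ^ 2 :=
    fun w hw => pow_le_one_div_sq_of_le_exp_neg hq0 hq hw
  refine ⟨key, tsum_le_pi_sq_div_six (fun n => pow_nonneg hq0 _) fun n => ?_⟩
  exact_mod_cast key (n + 1) n.succ_pos
end

section
/- For j ∈ {1,2} let b_j be nonzero reals and λ_j reals with 2λ_j > 1. Define d_w := (1/2)·Σ_{j=1}^{2}(1 − w·b_j²)·(2λ_j)^{−w} for w ≥ 1, c_0 := exp(−(b_1² + b_2²)/2)·(2λ_1)^{−1/2}·(2λ_2)^{−1/2}, and c_w := (1/w)·Σ_{r=0}^{w−1} d_{w−r}·c_r for w ≥ 1. Let d^u := sup_{w≥1} |d_w| (finite since 2λ_j > 1) and let D be a positive integer with d^u ≤ D ≤ d^u + 1. Then for any reals y > 0 and δf > 0, if the positive integer w_m satisfies (i) w_m ≥ 1/b_j² + 1/(2λ_j − 1) for j = 1,2, (ii) w_m ≥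 e²·y + D, and (iii) w_m ≥ 3D − ln(δf/(c_0·y^D)) − 1, then |Σ_{w=w_m}^{∞} (−1)^w·c_w·y^{w+1}/(w+1)!| < δf. -/
/-!
Bernoulli's inequality gives `|d_w| ≤ 1 + b_j²/(2λ_j − 1)` termwise, so `d^u` is finite and
`|d_w| ≤ D`. The recursion then yields `|c_w| ≤ c_0·C(w+D−1, w)`, by induction on the partial
sums `Σ_{r≤w} |c_r|`. Hence the tail is dominated termwise by `c_0·T_w` with
`T_w = C(w+D−1, w)·y^{w+1}/(w+1)!`, and `T_{w+1} ≤ T_w/2` as soon as `w ≥ e²y + D`, so the tail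
is at most `2c_0·T_{w_m}`. Finally `C(w_m+D−1, w_m) ≤ (2(w_m+1))^{D−1}`, `y ≤ (w_m+1)/e²` and
`(w_m+1)! ≥ ((w_m+1)/e)^{w_m+1}` give `2c_0·T_{w_m} ≤ c_0·y^D·e^{3D−w_m−1}/(w_m+1)`, which is
smaller than `δf` by (iii).
-/

open Finset Real Nat

/-- The `T_k` of the sketch above, with `D = E + 1` so that no natural subtraction occurs. -/
noncomputable def majorant (E : ℕ) (y : ℝ) (k : ℕ) : ℝ := (k + E).choose k * y ^ (k + 1) / (k + 1)!

section Recurrence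

variable {d c : ℕ → ℝ} {E : ℕ}

lemma abs_succ_le_of_recurrence (hd : ∀ k, 1 ≤ k → |d k| ≤ E + 1)
    (hc : ∀ w : ℕ, 1 ≤ w → c w = (1 / (w : ℝ)) * ∑ r ∈ range w, d (w - r) * c r) (w : ℕ) :
    |c (w + 1)| ≤ (E + 1) / (w + 1) * ∑ r ∈ range (w + 1), |c r| := by
  have hsum : |∑ r ∈ range (w + 1), d (w + 1 - r) * c r| ≤
      (E + 1) * ∑ r ∈ range (w + 1), |c r| := by
    refine (abs_sum_le_sum_abs _ _).trans ?_
    rw [mul_sum]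
    refine sum_le_sum fun r hr => ?_
    rw [abs_mul]
    exact mul_le_mul_of_nonneg_right (hd _ (by grind)) (abs_nonneg _)
  rw [hc _ (Nat.le_add_left 1 w), abs_mul, div_eq_mul_one_div _ ((w : ℝ) + 1),
    mul_comm _ (1 / _), mul_assoc]
  push_cast
  rw [abs_of_pos (by positivity)]
  gcongr

lemma cast_choose_succ_eq (n E : ℕ) :
    ((n + E + 1).choose (n + 1) : ℝ) = (E + 1) / (n + 1) * (n + E + 1).choose n := by
  have h := Nat.choose_succ_right_eq (n + E + 1) n
  rw [show n + E + 1 - n = E + 1 by omega] at h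
  field_simp
  rw [mul_comm (E + 1 : ℝ)]
  exact_mod_cast h

lemma sum_abs_le_choose_of_recurrence (hd : ∀ k, 1 ≤ k → |d k| ≤ E + 1)
    (hc : ∀ w : ℕ, 1 ≤ w → c w = (1 / (w : ℝ)) * ∑ r ∈ range w, d (w - r) * c r) (w : ℕ) :
    ∑ r ∈ range (w + 1), |c r| ≤ |c 0| * (w + E + 1).choose w := by
  induction w with
  | zero => simp
  | succ w ih =>
    have hnext := abs_succ_le_of_recurrence hd hc w
    have hpascal : ((w + 1 + E + 1).choose (w + 1) : ℝ) =
        (w + E + 1).choose w + (w + E + 1).choose (w + 1) := by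
      rw [show w + 1 + E + 1 = w + E + 1 + 1 by omega, Nat.choose_succ_succ']
      push_cast; ring
    rw [sum_range_succ, hpascal, mul_add, cast_choose_succ_eq]
    calc ∑ r ∈ range (w + 1), |c r| + |c (w + 1)|
        ≤ ∑ r ∈ range (w + 1), |c r| + (E + 1) / (w + 1) * ∑ r ∈ range (w + 1), |c r| := by
          gcongr
      _ ≤ _ := by
          have : (0 : ℝ) ≤ (E + 1) / (w + 1) := by positivity
          linarith [mul_le_mul_of_nonneg_left ih this]

lemma abs_le_choose_of_recurrence (hd : ∀ k, 1 ≤ k → |d k| ≤ E + 1)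
    (hc : ∀ w : ℕ, 1 ≤ w → c w = (1 / (w : ℝ)) * ∑ r ∈ range w, d (w - r) * c r) :
    ∀ w, |c w| ≤ |c 0| * (w + E).choose w
  | 0 => by simp
  | w + 1 => by
    calc |c (w + 1)| ≤ (E + 1) / (w + 1) * ∑ r ∈ range (w + 1), |c r| :=
          abs_succ_le_of_recurrence hd hc w
      _ ≤ (E + 1) / (w + 1) * (|c 0| * (w + E + 1).choose w) := by
          gcongr; exact sum_abs_le_choose_of_recurrence hd hc w
      _ = |c 0| * (w + 1 + E).choose (w + 1) := by
          rw [show w + 1 + E = w + E + 1 by omega, cast_choose_succ_eq]; ring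

lemma abs_term_le_majorant (hd : ∀ k, 1 ≤ k → |d k| ≤ E + 1)
    (hc : ∀ w : ℕ, 1 ≤ w → c w = (1 / (w : ℝ)) * ∑ r ∈ range w, d (w - r) * c r)
    {y : ℝ} (hy : 0 ≤ y) (k : ℕ) :
    |(-1 : ℝ) ^ k * c k * y ^ (k + 1) / (k + 1)!| ≤ |c 0| * majorant E y k := by
  simp only [abs_div, abs_mul, abs_pow, abs_neg, abs_one, one_pow, one_mul, abs_of_nonneg hy,
    Nat.abs_cast]
  unfold majorant
  rw [mul_div_assoc, mul_div_assoc, ← mul_assoc]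
  gcongr
  exact abs_le_choose_of_recurrence hd hc k

end Recurrence

lemma abs_one_sub_mul_div_pow_le {L : ℝ} (hL : 1 < L) (b : ℝ) (k : ℕ) :
    |(1 - k * b ^ 2) / L ^ k| ≤ 1 + b ^ 2 / (L - 1) := by
  have hbernoulli : 1 + k * (L - 1) ≤ L ^ k := one_add_mul_sub_le_pow (by linarith) k
  have hkb : k * b ^ 2 ≤ b ^ 2 / (L - 1) * L ^ k := by
    have hL1 : 0 < L - 1 := by linarith
    calc (k : ℝ) * b ^ 2 ≤ b ^ 2 / (L - 1) * (1 + k * (L - 1)) := by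
          field_simp; nlinarith [sq_nonneg b]
      _ ≤ b ^ 2 / (L - 1) * L ^ k := by gcongr
  have habs : |1 - k * b ^ 2| ≤ 1 + k * b ^ 2 := by
    rw [abs_le]; constructor <;> nlinarith [sq_nonneg b, Nat.cast_nonneg (α := ℝ) k]
  have hLk : 0 < L ^ k := pow_pos (by linarith) k
  rw [abs_div, abs_of_pos hLk, div_le_iff₀ hLk]
  nlinarith [one_le_pow₀ (n := k) hL.le]

lemma abs_half_add_le {lam1 lam2 : ℝ} (hlam1 : 1 < 2 * lam1) (hlam2 : 1 < 2 * lam2)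
    (b1 b2 : ℝ) (k : ℕ) :
    |(1 / 2) * ((1 - k * b1 ^ 2) / (2 * lam1) ^ k + (1 - k * b2 ^ 2) / (2 * lam2) ^ k)| ≤
      (1 / 2) * ((1 + b1 ^ 2 / (2 * lam1 - 1)) + (1 + b2 ^ 2 / (2 * lam2 - 1))) := by
  have h1 := abs_one_sub_mul_div_pow_le hlam1 b1 k
  have h2 := abs_one_sub_mul_div_pow_le hlam2 b2 k
  rw [abs_mul, abs_of_pos (by norm_num : (0 : ℝ) < 1 / 2)]
  gcongr
  exact (abs_add_le _ _).trans (add_le_add h1 h2)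

lemma abs_tsum_le_of_le_geometric {f G : ℕ → ℝ} {ρ : ℝ} (hρ0 : 0 ≤ ρ) (hρ1 : ρ < 1)
    (hG : ∀ k, G (k + 1) ≤ ρ * G k) (hf : ∀ k, |f k| ≤ G k) :
    |∑' k, f k| ≤ G 0 / (1 - ρ) := by
  have hgeom : ∀ k, |f k| ≤ G 0 * ρ ^ k := fun k => (hf k).trans <| by
    induction k with
    | zero => simp
    | succ k ih =>
      calc G (k + 1) ≤ ρ * G k := hG k
        _ ≤ ρ * (G 0 * ρ ^ k) := by gcongr
        _ = G 0 * ρ ^ (k + 1) := by ring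
  have hsum : Summable fun k => G 0 * ρ ^ k :=
    (summable_geometric_of_lt_one hρ0 hρ1).mul_left _
  have hsum_abs : Summable fun k => |f k| :=
    hsum.of_nonneg_of_le (fun k => abs_nonneg _) hgeom
  calc |∑' k, f k| ≤ ∑' k, |f k| := by
        simpa only [Real.norm_eq_abs] using norm_tsum_le_tsum_norm (f := f) hsum_abs
    _ ≤ ∑' k, G 0 * ρ ^ k := hsum_abs.tsum_le_tsum hgeom hsum
    _ = G 0 / (1 - ρ) := by rw [tsum_mul_left, tsum_geometric_of_lt_one hρ0 hρ1, div_eq_mul_inv]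

lemma majorant_nonneg (E : ℕ) {y : ℝ} (hy : 0 ≤ y) (k : ℕ) : 0 ≤ majorant E y k := by
  unfold majorant; positivity

lemma majorant_succ (E : ℕ) (y : ℝ) (k : ℕ) :
    majorant E y (k + 1) = y * (k + E + 1) / ((k + 1) * (k + 2)) * majorant E y k := by
  have hchoose := Nat.add_one_mul_choose_eq (k + E) k
  have hchooseR : ((k + 1 + E).choose (k + 1) : ℝ) = (k + E + 1) / (k + 1) * (k + E).choose k := by
    rw [show k + 1 + E = k + E + 1 by omega, div_mul_eq_mul_div, eq_div_iff (by positivity)]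
    exact_mod_cast hchoose.symm
  unfold majorant
  rw [hchooseR, Nat.factorial_succ (k + 1)]
  push_cast
  field_simp
  ring

lemma majorant_succ_le_half (E : ℕ) {y : ℝ} (hy : 0 ≤ y) {k : ℕ} (hk : 2 * y ≤ k - E) :
    majorant E y (k + 1) ≤ majorant E y k / 2 := by
  have hratio : y * (k + E + 1) / ((k + 1) * (k + 2)) ≤ 1 / 2 := by
    rw [div_le_iff₀ (by positivity)]
    nlinarith [mul_le_mul_of_nonneg_right hk (by positivity : (0 : ℝ) ≤ k + E + 1)]
  rw [majorant_succ, div_eq_mul_one_div _ (2 : ℝ), mul_comm _ (1 / 2)]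
  exact mul_le_mul_of_nonneg_right hratio (majorant_nonneg E hy k)

lemma cast_add_choose_le_two_mul_pow (E n : ℕ) :
    ((E + n + E).choose (E + n) : ℝ) ≤ (2 * (E + n + 1 : ℝ)) ^ E := by
  rw [Nat.choose_symm_add]
  calc ((E + n + E).choose E : ℝ) ≤ ((E + n + E : ℕ) : ℝ) ^ E := by
        exact_mod_cast Nat.choose_le_pow _ _
    _ ≤ (2 * (E + n + 1 : ℝ)) ^ E := by gcongr; push_cast; linarith

lemma majorant_le (E m : ℕ) {y : ℝ} (hy : 0 ≤ y) (hEm : E ≤ m) (hym : exp 1 ^ 2 * y ≤ m + 1) :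
    majorant E y m ≤ 2 ^ E * y ^ (E + 1) * exp (2 * E + 1 - m) / (m + 1) := by
  obtain ⟨n, rfl⟩ : ∃ n, m = E + n := ⟨m - E, by omega⟩
  set W : ℝ := E + n + 1 with hW
  have hWpos : 0 < W := by positivity
  set X : ℝ := exp 1 ^ 2 with hXdef
  have hX : 0 < X := by positivity
  have hpow : y ^ (E + n + 1) ≤ y ^ (E + 1) * (W / X) ^ n := by
    rw [show E + n + 1 = E + 1 + n by omega, pow_add]
    gcongr
    rw [le_div_iff₀ hX, mul_comm]
    push_cast at hym; linarith
  have hfact : W ^ (E + n + 1) / (E + n + 1)! ≤ exp W := by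
    simpa [hW] using pow_div_factorial_le_exp _ hWpos.le (E + n + 1)
  clear_value W X
  have hexp : exp (2 * E + 1 - (E + n : ℕ)) = exp W / X ^ n := by
    rw [hXdef, ← pow_mul, exp_one_pow, ← exp_sub, hW]
    congr 1; push_cast; ring
  unfold majorant
  calc ((E + n + E).choose (E + n) : ℝ) * y ^ (E + n + 1) / (E + n + 1)!
      ≤ (2 * W) ^ E * (y ^ (E + 1) * (W / X) ^ n) / (E + n + 1)! := by
        gcongr
        rw [hW]; exact cast_add_choose_le_two_mul_pow E n
    _ = 2 ^ E * y ^ (E + 1) / X ^ n / W * (W ^ (E + n + 1) / (E + n + 1)!) := by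
        rw [div_pow]; field_simp
        ring
    _ ≤ 2 ^ E * y ^ (E + 1) / X ^ n / W * exp W := by gcongr
    _ = _ := by rw [hexp]; push_cast; rw [← hW]; field_simp

lemma two_mul_majorant_le (E m : ℕ) {y : ℝ} (hy : 0 ≤ y) (hym : exp 1 ^ 2 * y + (E + 1) ≤ m) :
    2 * majorant E y m ≤ y ^ (E + 1) * exp (3 * (E + 1) - m - 1) / (m + 1) := by
  have hXy : 0 ≤ exp 1 ^ 2 * y := by positivity
  have hmaj := majorant_le E m hy (by exact_mod_cast (show (E : ℝ) ≤ m by linarith)) (by linarith)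
  calc 2 * majorant E y m ≤ 2 * (2 ^ E * y ^ (E + 1) * exp (2 * E + 1 - m) / (m + 1)) := by gcongr
    _ = y ^ (E + 1) * (2 ^ (E + 1) * exp (2 * E + 1 - m)) / (m + 1) := by ring
    _ ≤ y ^ (E + 1) * (exp 1 ^ (E + 1) * exp (2 * E + 1 - m)) / (m + 1) := by
        gcongr; exact exp_one_gt_two.le
    _ = _ := by rw [exp_one_pow, ← exp_add]; push_cast; ring_nf

lemma abs_le_iSup_abs_succ {b1 b2 lam1 lam2 : ℝ} (hlam1 : 1 < 2 * lam1) (hlam2 : 1 < 2 * lam2)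
    {d : ℕ → ℝ}
    (hd : ∀ w : ℕ, 1 ≤ w →
      d w = (1 / 2) * ((1 - (w : ℝ) * b1 ^ 2) / (2 * lam1) ^ w
        + (1 - (w : ℝ) * b2 ^ 2) / (2 * lam2) ^ w))
    {k : ℕ} (hk : 1 ≤ k) : |d k| ≤ ⨆ w : ℕ, |d (w + 1)| := by
  have hbdd : BddAbove (Set.range fun w => |d (w + 1)|) :=
    ⟨_, Set.forall_mem_range.2 fun w =>
      (hd (w + 1) (Nat.le_add_left 1 w)) ▸ abs_half_add_le hlam1 hlam2 b1 b2 (w + 1)⟩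
  obtain ⟨w, rfl⟩ : ∃ w, k = w + 1 := ⟨k - 1, by omega⟩
  exact le_ciSup hbdd w

theorem truncation_error_lt_threshold_general
    (b1 b2 lam1 lam2 : ℝ)
    (hlam1 : 1 < 2 * lam1) (hlam2 : 1 < 2 * lam2)
    (d : ℕ → ℝ)
    (hd : ∀ w : ℕ, 1 ≤ w →
      d w = (1 / 2) * ((1 - (w : ℝ) * b1 ^ 2) / (2 * lam1) ^ w
        + (1 - (w : ℝ) * b2 ^ 2) / (2 * lam2) ^ w))
    (c0 : ℝ)
    (hc0 : c0 = Real.exp (-(b1 ^ 2 + b2 ^ 2) / 2) *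
      (2 * lam1) ^ (-(1 : ℝ) / 2) * (2 * lam2) ^ (-(1 : ℝ) / 2))
    (c : ℕ → ℝ) (hcz : c 0 = c0)
    (hc : ∀ w : ℕ, 1 ≤ w → c w = (1 / (w : ℝ)) * ∑ r ∈ Finset.range w, d (w - r) * c r)
    (du : ℝ) (hdu : du = ⨆ w : ℕ, |d (w + 1)|)
    (D : ℕ) (hDpos : 1 ≤ D) (hD1 : du ≤ (D : ℝ))
    (y δf : ℝ) (hy : 0 < y) (hδf : 0 < δf)
    (wm : ℕ)
    (hwm2 : Real.exp 1 ^ 2 * y + (D : ℝ) ≤ (wm : ℝ))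
    (hwm3 : 3 * (D : ℝ) - Real.log (δf / (c0 * y ^ D)) - 1 ≤ (wm : ℝ)) :
    |∑' w : ℕ, (-1 : ℝ) ^ (w + wm) * c (w + wm) * y ^ (w + wm + 1) /
        (Nat.factorial (w + wm + 1) : ℝ)| < δf := by
  obtain ⟨E, rfl⟩ : ∃ E, D = E + 1 := ⟨D - 1, by omega⟩
  push_cast at hD1 hwm2 hwm3
  have hc0pos : 0 < c0 := by
    rw [hc0]
    exact mul_pos (mul_pos (exp_pos _) (rpow_pos_of_pos (by linarith) _))
      (rpow_pos_of_pos (by linarith) _)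
  have hdE : ∀ k, 1 ≤ k → |d k| ≤ E + 1 := fun k hk =>
    (hdu ▸ abs_le_iSup_abs_succ hlam1 hlam2 hd hk).trans hD1
  have hterm := abs_term_le_majorant hdE hc hy.le
  rw [hcz, abs_of_pos hc0pos] at hterm
  have h2y : 2 * y ≤ exp 1 ^ 2 * y := by gcongr; nlinarith [exp_one_gt_two]
  have hratio : ∀ j, c0 * majorant E y (j + 1 + wm) ≤ 1 / 2 * (c0 * majorant E y (j + wm)) := by
    intro j
    have hk : 2 * y ≤ ((j + wm : ℕ) : ℝ) - E := by
      push_cast; linarith [(j.cast_nonneg : (0 : ℝ) ≤ j)]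
    rw [show j + 1 + wm = j + wm + 1 by omega]
    nlinarith [majorant_succ_le_half E hy.le hk]
  have htail := abs_tsum_le_of_le_geometric (G := fun j => c0 * majorant E y (j + wm))
    (ρ := 1 / 2) (by norm_num) (by norm_num) hratio (fun j => hterm (j + wm))
  have hlog : exp (3 * (E + 1) - wm - 1) ≤ δf / (c0 * y ^ (E + 1)) := by
    rw [← exp_log (by positivity : 0 < δf / (c0 * y ^ (E + 1)))]
    exact exp_le_exp.2 (by linarith)
  calc _ ≤ c0 * majorant E y wm / (1 - 1 / 2) := by simpa using htail
    _ = c0 * (2 * majorant E y wm) := by ring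
    _ ≤ c0 * (y ^ (E + 1) * exp (3 * (E + 1) - wm - 1) / (wm + 1)) := by
        gcongr; exact two_mul_majorant_le E wm hy.le hwm2
    _ ≤ c0 * (y ^ (E + 1) * (δf / (c0 * y ^ (E + 1))) / (wm + 1)) := by gcongr
    _ = δf / (wm + 1) := by field_simp
    _ < δf := div_lt_self hδf (by linarith)

/-- Truncation-error bound (Theorem 3 of the paper): with `b_j ≠ 0`, `2λ_j > 1`,
`d_w = (1/2)·Σ_{j=1}^{2}(1 − w·b_j²)·(2λ_j)^{−w}`,
`c_0 = exp(−(b₁² + b₂²)/2)·(2λ₁)^{−1/2}·(2λ₂)^{−1/2}`,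
`c_w = (1/w)·Σ_{r=0}^{w−1} d_{w−r}·c_r`, `d^u = sup_{w≥1} |d_w|`, and a positive
integer `D` with `d^u ≤ D ≤ d^u + 1`: for any `y > 0` and `δf > 0`, if the positive
integer `w_m` satisfies `w_m ≥ 1/b_j² + 1/(2λ_j − 1)` (`j = 1,2`),
`w_m ≥ e²·y + D` and `w_m ≥ 3D − ln(δf/(c_0·y^D)) − 1`, then
`|Σ_{w=w_m}^{∞} (−1)^w·c_w·y^{w+1}/(w+1)!| < δf`. -/
theorem truncation_error_lt_threshold
    (b1 b2 lam1 lam2 : ℝ) (hb1 : b1 ≠ 0) (hb2 : b2 ≠ 0)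
    (hlam1 : 1 < 2 * lam1) (hlam2 : 1 < 2 * lam2)
    (d : ℕ → ℝ)
    (hd : ∀ w : ℕ, 1 ≤ w →
      d w = (1 / 2) * ((1 - (w : ℝ) * b1 ^ 2) / (2 * lam1) ^ w
        + (1 - (w : ℝ) * b2 ^ 2) / (2 * lam2) ^ w))
    (c0 : ℝ)
    (hc0 : c0 = Real.exp (-(b1 ^ 2 + b2 ^ 2) / 2) *
      (2 * lam1) ^ (-(1 : ℝ) / 2) * (2 * lam2) ^ (-(1 : ℝ) / 2))
    (c : ℕ → ℝ) (hcz : c 0 = c0)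
    (hc : ∀ w : ℕ, 1 ≤ w → c w = (1 / (w : ℝ)) * ∑ r ∈ Finset.range w, d (w - r) * c r)
    (du : ℝ) (hdu : du = ⨆ w : ℕ, |d (w + 1)|)
    (D : ℕ) (hDpos : 1 ≤ D) (hD1 : du ≤ (D : ℝ)) (hD2 : (D : ℝ) ≤ du + 1)
    (y δf : ℝ) (hy : 0 < y) (hδf : 0 < δf)
    (wm : ℕ) (hwmpos : 1 ≤ wm)
    (hwm1 : 1 / b1 ^ 2 + 1 / (2 * lam1 - 1) ≤ (wm : ℝ))
    (hwm1' : 1 / b2 ^ 2 + 1 / (2 * lam2 - 1) ≤ (wm : ℝ))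
    (hwm2 : Real.exp 1 ^ 2 * y + (D : ℝ) ≤ (wm : ℝ))
    (hwm3 : 3 * (D : ℝ) - Real.log (δf / (c0 * y ^ D)) - 1 ≤ (wm : ℝ)) :
    |∑' w : ℕ, (-1 : ℝ) ^ (w + wm) * c (w + wm) * y ^ (w + wm + 1) /
        (Nat.factorial (w + wm + 1) : ℝ)| < δf :=
  truncation_error_lt_threshold_general b1 b2 lam1 lam2 hlam1 hlam2 d hd c0 hc0 c hcz hc du hdu D
    hDpos hD1 y δf hy hδf wm hwm2 hwm3
end
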